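/- arXiv:1411.5189 — 6 statements merged into one kernel-verified Lean document; each statement's English description precedes it below -/
import Mathlib

section
/- Suppose σ is a nonnegative random variable such that limsup_{t→0+} t · log P(σ ≤ t) ≤ -c for some c > 0. Then limsup_{λ→∞} λ^{-1/2} log E[exp(-λσ)] ≤ -2√c. -/
/-!
Upper bound. Near `0`, `P(σ ≤ t) ≤ exp (-c' / t)` for every `c' < c`. By the layer cake formula
`E[exp (-λσ)] = ∫₀¹ P(exp (-λσ) ≥ u) du`, and for `u = exp (-λt)` the AM-GM inequality
`λt + c'/t ≥ 2√(c'λ)` bounds the integrand by `K / u` with `K = exp (-2√(c'λ))`. Splitting the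
integral at `K` gives `E[exp (-λσ)] ≤ K (1 + 2√(c'λ))`, whence the rate `-2√c'`; then let `c' → c`.

Since `limsup` on `ℝ` is `0` for a function tending to `-∞`, the claim also requires
`λ^{-1/2} log E[exp (-λσ)]` to be frequently bounded below. This comes from
`E[exp (-λσ)] ≥ exp (-λt) P(σ ≤ t)` at `λ = t⁻²`, along the `t → 0+` where `t log P(σ ≤ t)` is
bounded below.
-/

open MeasureTheory Filter Set Topology Real

lemma two_sqrt_mul_le_mul_add_div {a b t : ℝ} (ha : 0 ≤ a) (hb : 0 ≤ b) (ht : 0 < t) :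
    2 * √(a * b) ≤ b * t + a / t := by
  have hsq : 2 * √(a * b) = √(4 * (b * t) * (a / t)) := by
    rw [show 4 * (b * t) * (a / t) = 2 ^ 2 * (a * b) by field_simp; ring,
      sqrt_mul (sq_nonneg 2) (a * b), sqrt_sq zero_le_two]
  rw [hsq, sqrt_le_left (by positivity)]
  exact four_mul_le_sq_add _ _

lemma le_exp_neg_div_of_mul_log_le {x t c : ℝ} (ht : 0 < t) (h : t * log x ≤ -c) :
    x ≤ exp (-c / t) :=
  (le_exp_log x).trans <| exp_le_exp.mpr <| by rw [le_div_iff₀ ht]; linarith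

lemma tendsto_log_one_add_two_sqrt_mul_div_sqrt {c : ℝ} (hc : 0 < c) :
    Tendsto (fun x => log (1 + 2 * √(c * x)) / √x) atTop (𝓝 0) := by
  have hs : 0 < 2 * √c := by positivity
  have h_arg : Tendsto (fun x => 1 + 2 * √(c * x)) atTop atTop := by
    refine tendsto_atTop_add_const_left _ 1 ?_
    refine Tendsto.const_mul_atTop two_pos ?_
    exact tendsto_sqrt_atTop.comp (tendsto_id.const_mul_atTop hc)
  refine ((tendsto_pow_log_div_mul_add_atTop (2 * √c)⁻¹ (-(2 * √c)⁻¹) 1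
    (inv_ne_zero hs.ne')).comp h_arg).congr' ?_
  filter_upwards [eventually_ge_atTop 0] with x hx
  simp only [Function.comp_apply, pow_one, sqrt_mul hc.le]
  congr 1
  field_simp
  ring

section Laplace

variable {Ω : Type*} [MeasurableSpace Ω] {P : Measure Ω} {σ : Ω → ℝ} {c δ lam : ℝ}

lemma integrable_exp_neg_mul [IsFiniteMeasure P] (hσ : Measurable σ) (hσ0 : ∀ ω, 0 ≤ σ ω)
    (hlam : 0 ≤ lam) : Integrable (fun ω => exp (-lam * σ ω)) P := by
  refine (integrable_const (1 : ℝ)).mono' (by fun_prop) (Eventually.of_forall fun ω => ?_)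
  rw [norm_of_nonneg (exp_pos _).le, exp_le_one_iff]
  nlinarith [hσ0 ω]

lemma exp_neg_mul_mul_measureReal_le_integral [IsFiniteMeasure P] (hσ : Measurable σ)
    (hσ0 : ∀ ω, 0 ≤ σ ω) (hlam : 0 ≤ lam) (t : ℝ) :
    exp (-lam * t) * P.real {ω | σ ω ≤ t} ≤ ∫ ω, exp (-lam * σ ω) ∂P := by
  have hint := integrable_exp_neg_mul hσ hσ0 hlam (P := P)
  calc exp (-lam * t) * P.real {ω | σ ω ≤ t}
      ≤ ∫ ω in {ω | σ ω ≤ t}, exp (-lam * σ ω) ∂P := by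
        refine setIntegral_ge_of_const_le_real (measurableSet_le hσ measurable_const)
          (measure_ne_top P _) (fun ω (hω : σ ω ≤ t) => ?_) hint.integrableOn
        exact exp_le_exp.mpr (by nlinarith)
    _ ≤ ∫ ω, exp (-lam * σ ω) ∂P :=
        setIntegral_le_integral hint (Eventually.of_forall fun ω => (exp_pos _).le)

lemma measureReal_le_exp_neg_mul_le (hc : 0 ≤ c) (hlam : 0 < lam)
    (hG : ∀ t ∈ Ioo 0 δ, P.real {ω | σ ω ≤ t} ≤ exp (-c / t))
    {u : ℝ} (hu : u ∈ Ioo (exp (-(lam * δ))) 1) :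
    P.real {ω | u ≤ exp (-lam * σ ω)} ≤ exp (-(2 * √(c * lam))) * u⁻¹ := by
  obtain ⟨hδu, hu1⟩ := hu
  have hu0 : 0 < u := (exp_pos _).trans hδu
  set t := -log u / lam with ht
  have ht0 : 0 < t := div_pos (neg_pos.mpr (log_neg hu0 hu1)) hlam
  have htδ : t < δ := by
    have := log_lt_log (exp_pos _) hδu
    rw [log_exp] at this
    rw [ht, div_lt_iff₀ hlam]
    linarith
  have hset : {ω | u ≤ exp (-lam * σ ω)} = {ω | σ ω ≤ t} := by
    ext ω
    simp only [mem_ofPred_eq, ← log_le_iff_le_exp hu0, ht, le_div_iff₀ hlam]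
    constructor <;> intro h <;> linarith
  have hu_inv : u⁻¹ = exp (lam * t) := by
    rw [ht, mul_div_cancel₀ _ hlam.ne', exp_neg, exp_log hu0]
  rw [hset, hu_inv, ← exp_add]
  refine (hG t ⟨ht0, htδ⟩).trans (exp_le_exp.mpr ?_)
  rw [neg_div]
  linarith [two_sqrt_mul_le_mul_add_div hc hlam.le ht0]

lemma integral_exp_neg_mul_le [IsProbabilityMeasure P] (hσ : Measurable σ)
    (hσ0 : ∀ ω, 0 ≤ σ ω) (hc : 0 ≤ c) (hlam : 0 < lam) (hδ : 2 * √(c * lam) ≤ lam * δ)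
    (hG : ∀ t ∈ Ioo 0 δ, P.real {ω | σ ω ≤ t} ≤ exp (-c / t)) :
    ∫ ω, exp (-lam * σ ω) ∂P ≤ (1 + 2 * √(c * lam)) * exp (-(2 * √(c * lam))) := by
  set s := 2 * √(c * lam)
  set K := exp (-s) with hK
  set g : ℝ → ℝ := fun u => P.real {ω | u ≤ exp (-lam * σ ω)}
  have hK0 : 0 < K := exp_pos _
  have hK1 : K ≤ 1 := exp_le_one_iff.mpr (neg_nonpos.mpr (by positivity))
  have hg1 : ∀ u, g u ≤ 1 := fun u => measureReal_le_one
  have hg_anti : Antitone g := fun u v huv =>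
    measureReal_mono fun ω (hω : v ≤ exp (-lam * σ ω)) => huv.trans hω
  have hg_int : IntegrableOn g (Ioc 0 1) := by
    refine Measure.integrableOn_of_bounded (M := 1) measure_Ioc_lt_top.ne
      hg_anti.measurable.aestronglyMeasurable (Eventually.of_forall fun u => ?_)
    rw [norm_of_nonneg measureReal_nonneg]
    exact hg1 u
  have hlayer : ∫ ω, exp (-lam * σ ω) ∂P = ∫ u in Ioc 0 1, g u :=
    (integrable_exp_neg_mul (P := P) hσ hσ0 hlam.le).integral_eq_integral_Ioc_meas_le
      (Eventually.of_forall fun ω => (exp_pos _).le)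
      (Eventually.of_forall fun ω => exp_le_one_iff.mpr (by nlinarith [hσ0 ω]))
  have h_low : ∫ u in Ioc 0 K, g u ≤ K := by
    calc ∫ u in Ioc 0 K, g u ≤ ∫ u in Ioc 0 K, (1 : ℝ) :=
          setIntegral_mono_on (hg_int.mono_set (Ioc_subset_Ioc_right hK1))
            (integrableOn_const measure_Ioc_lt_top.ne) measurableSet_Ioc fun u _ => hg1 u
      _ = K := by simp [volume_real_Ioc_of_le hK0.le]
  have h_high : ∫ u in Ioc K 1, g u ≤ K * s := by
    calc ∫ u in Ioc K 1, g u = ∫ u in Ioo K 1, g u := integral_Ioc_eq_integral_Ioo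
      _ ≤ ∫ u in Ioo K 1, K * u⁻¹ := by
          refine setIntegral_mono_on (hg_int.mono_set (Ioo_subset_Ioc_self.trans
            (Ioc_subset_Ioc_left hK0.le))) ?_ measurableSet_Ioo fun u hu => ?_
          · exact (continuousOn_const.mul (continuousOn_inv₀.mono fun u hu =>
              (hK0.trans_le hu.1).ne')).integrableOn_Icc.mono_set Ioo_subset_Icc_self
          · exact measureReal_le_exp_neg_mul_le hc hlam hG
              ⟨(exp_le_exp.mpr (by linarith)).trans_lt hu.1, hu.2⟩
      _ = K * s := by
          rw [← integral_Ioc_eq_integral_Ioo, ← intervalIntegral.integral_of_le hK1,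
            intervalIntegral.integral_const_mul, integral_inv_of_pos hK0 one_pos, div_eq_inv_mul,
            mul_one, log_inv, hK, log_exp, neg_neg]
  calc ∫ ω, exp (-lam * σ ω) ∂P
      = (∫ u in Ioc 0 K, g u) + ∫ u in Ioc K 1, g u := by
        rw [hlayer, ← Ioc_union_Ioc_eq_Ioc hK0.le hK1, setIntegral_union
          (Ioc_disjoint_Ioc_of_le le_rfl) measurableSet_Ioc
          (hg_int.mono_set (Ioc_subset_Ioc_right hK1))
          (hg_int.mono_set (Ioc_subset_Ioc_left hK0.le))]
    _ ≤ K + K * s := add_le_add h_low h_high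
    _ = (1 + s) * K := by ring

lemma isCoboundedUnder_le_log_laplace [IsFiniteMeasure P] (hσ : Measurable σ)
    (hσ0 : ∀ ω, 0 ≤ σ ω) {b : ℝ}
    (hb : ∃ᶠ t in 𝓝[>] 0, b ≤ t * log (P.real {ω | σ ω ≤ t}) ∧ 0 < P.real {ω | σ ω ≤ t}) :
    IsCoboundedUnder (· ≤ ·) atTop
      (fun lam => (√lam)⁻¹ * log (∫ ω, exp (-lam * σ ω) ∂P)) := by
  refine IsCoboundedUnder.of_frequently_ge (a := b - 1) ?_
  have hlam : Tendsto (fun t : ℝ => t⁻¹ ^ 2) (𝓝[>] 0) atTop :=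
    (tendsto_pow_atTop two_ne_zero).comp tendsto_inv_nhdsGT_zero
  refine hlam.frequently ((hb.and_eventually self_mem_nhdsWithin).mono ?_)
  rintro t ⟨⟨hbt, hGt⟩, ht : 0 < t⟩
  have hlog : -t⁻¹ + log (P.real {ω | σ ω ≤ t}) ≤ log (∫ ω, exp (-t⁻¹ ^ 2 * σ ω) ∂P) := by
    calc -t⁻¹ + log (P.real {ω | σ ω ≤ t})
        = log (exp (-t⁻¹ ^ 2 * t) * P.real {ω | σ ω ≤ t}) := by
          rw [log_mul (exp_pos _).ne' hGt.ne', log_exp]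
          field_simp
      _ ≤ _ := log_le_log (by positivity)
          (exp_neg_mul_mul_measureReal_le_integral hσ hσ0 (sq_nonneg t⁻¹) t)
  rw [sqrt_sq (inv_nonneg.mpr ht.le), inv_inv]
  calc b - 1 ≤ t * (-t⁻¹ + log (P.real {ω | σ ω ≤ t})) := by
        rw [mul_add, mul_neg, mul_inv_cancel₀ ht.ne']
        linarith
    _ ≤ _ := mul_le_mul_of_nonneg_left hlog ht.le

lemma limsup_log_laplace_le [IsProbabilityMeasure P] (hσ : Measurable σ) (hσ0 : ∀ ω, 0 ≤ σ ω)
    (hF : IsCoboundedUnder (· ≤ ·) atTop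
      (fun lam => (√lam)⁻¹ * log (∫ ω, exp (-lam * σ ω) ∂P)))
    (hc : 0 < c) (hφ : ∀ᶠ t in 𝓝[>] 0, t * log (P.real {ω | σ ω ≤ t}) ≤ -c) :
    limsup (fun lam => (√lam)⁻¹ * log (∫ ω, exp (-lam * σ ω) ∂P)) atTop ≤ -2 * √c := by
  obtain ⟨δ, hδ0, hδ⟩ := (nhdsGT_basis 0).eventually_iff.mp hφ
  have hG : ∀ t ∈ Ioo 0 δ, P.real {ω | σ ω ≤ t} ≤ exp (-c / t) := fun t ht =>
    le_exp_neg_div_of_mul_log_le ht.1 (hδ ht)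
  have hbound : ∀ᶠ lam in atTop, (√lam)⁻¹ * log (∫ ω, exp (-lam * σ ω) ∂P)
      ≤ -2 * √c + log (1 + 2 * √(c * lam)) / √lam := by
    filter_upwards [eventually_gt_atTop 0, eventually_ge_atTop (4 * c / δ ^ 2)]
      with lam hlam hlamδ
    have hsplit : 2 * √(c * lam) ≤ lam * δ := by
      rw [div_le_iff₀ (by positivity)] at hlamδ
      rw [← sqrt_sq (by positivity : 0 ≤ lam * δ), show 2 * √(c * lam) = √(4 * c * lam) by
        rw [mul_assoc, sqrt_mul zero_le_four, show (4 : ℝ) = 2 ^ 2 by norm_num,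
          sqrt_sq zero_le_two]]
      exact sqrt_le_sqrt (by nlinarith)
    have hE := log_le_log (integral_exp_pos (integrable_exp_neg_mul hσ hσ0 hlam.le))
      (integral_exp_neg_mul_le hσ hσ0 hc.le hlam hsplit hG)
    rw [log_mul (by positivity) (exp_pos _).ne', log_exp] at hE
    calc (√lam)⁻¹ * log (∫ ω, exp (-lam * σ ω) ∂P)
        ≤ (√lam)⁻¹ * (log (1 + 2 * √(c * lam)) + -(2 * √(c * lam))) :=
          mul_le_mul_of_nonneg_left hE (by positivity)
      _ = -2 * √c + log (1 + 2 * √(c * lam)) / √lam := by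
          rw [sqrt_mul hc.le]
          field_simp
          ring
  have hlim := (tendsto_log_one_add_two_sqrt_mul_div_sqrt hc).const_add (-2 * √c)
  rw [add_zero] at hlim
  calc limsup (fun lam => (√lam)⁻¹ * log (∫ ω, exp (-lam * σ ω) ∂P)) atTop
      ≤ limsup (fun lam => -2 * √c + log (1 + 2 * √(c * lam)) / √lam) atTop :=
        limsup_le_limsup hbound hF hlim.isBoundedUnder_le
    _ = -2 * √c := hlim.limsup_eq

end Laplace

/-- If `limsup_{t→0+} t log P(σ ≤ t) ≤ -c` for some `c > 0`, then
`limsup_{λ→∞} λ^{-1/2} log E[exp(-λσ)] ≤ -2√c`. -/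
theorem stmt_3 {Ω : Type*} [MeasurableSpace Ω] (P : Measure Ω) [IsProbabilityMeasure P]
    (σ : Ω → ℝ) (hσmeas : Measurable σ) (hσnonneg : ∀ ω, 0 ≤ σ ω)
    (c : ℝ) (hc : 0 < c)
    (h : limsup (fun t : ℝ => t * Real.log (P {ω | σ ω ≤ t}).toReal) (nhdsWithin 0 (Set.Ioi 0)) ≤ -c) :
    limsup (fun lam : ℝ => (Real.sqrt lam)⁻¹ * Real.log (∫ ω, Real.exp (-lam * σ ω) ∂P)) atTop ≤
      -2 * Real.sqrt c := by
  change limsup (fun t => t * log (P.real {ω | σ ω ≤ t})) (𝓝[>] 0) ≤ -c at h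
  -- `limsup` is `0` on unbounded functions, so `h` with `-c < 0` forces boundedness both ways.
  have hφ_bdd : IsBoundedUnder (· ≤ ·) (𝓝[>] 0) (fun t => t * log (P.real {ω | σ ω ≤ t})) := by
    by_contra hb
    rw [Real.limsup_of_not_isBoundedUnder hb] at h
    linarith
  have hφ_cobdd : IsCoboundedUnder (· ≤ ·) (𝓝[>] 0)
      (fun t => t * log (P.real {ω | σ ω ≤ t})) := by
    by_contra hb
    rw [Real.limsup_of_not_isCoboundedUnder hb] at h
    linarith
  have hφ_lt {c' : ℝ} (hc' : c' < c) : ∀ᶠ t in 𝓝[>] 0, t * log (P.real {ω | σ ω ≤ t}) < -c' :=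
    eventually_lt_of_limsup_lt (h.trans_lt (neg_lt_neg hc')) hφ_bdd
  have hF := isCoboundedUnder_le_log_laplace hσmeas hσnonneg
    (((frequently_lt_of_lt_limsup hφ_cobdd (sub_one_lt _)).and_eventually (hφ_lt hc)).mono
      fun t ⟨hlow, hneg⟩ => ⟨hlow.le, measureReal_nonneg.lt_of_ne fun h0 => by
        rw [← h0, log_zero, mul_zero] at hneg
        linarith⟩)
  have hcont : Tendsto (fun c' => -2 * √c') (𝓝[<] c) (𝓝 (-2 * √c)) :=
    ((continuous_sqrt.tendsto c).const_mul (-2)).mono_left nhdsWithin_le_nhds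
  exact ge_of_tendsto hcont (eventually_of_mem (Ioo_mem_nhdsLT hc) fun c' hc' =>
    limsup_log_laplace_le hσmeas hσnonneg hF hc'.1 ((hφ_lt hc'.2).mono fun _ => le_of_lt))
end

section
/- Let ξ₁, ..., ξ_n be nonnegative random variables such that for some λ > 0 and M ∈ (0,1), the conditional bound E[exp(-λ ξ_k) | ξ₁,...,ξ_{k-1}] ≤ M holds almost surely for every k = 1,...,n. Then for any T > 0, P(ξ₁ + ... + ξ_n < T) ≤ exp(λT) · Mⁿ. -/
/-!
Chernoff's bound gives `P(S < T) ≤ e^{λT} E[e^{-λS}]` for `S = ξ₁ + ⋯ + ξₙ`, and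
`E[e^{-λS}] = E[∏ₖ e^{-λξₖ}] ≤ Mⁿ` by peeling off the last factor: the other factors are
measurable with respect to `σ(ξ₁, …, ξₙ₋₁)`, so they come out of the conditional expectation given
it, and what remains of the last factor is at most `M`.
-/

open MeasureTheory ProbabilityTheory

section ConditionalLaplaceBound

variable {Ω : Type*} {m m₀ : MeasurableSpace Ω} {μ : Measure Ω}

theorem integral_mul_le_of_condExp_le [IsFiniteMeasure μ] (hm : m ≤ m₀) {F g : Ω → ℝ} {C M : ℝ}
    (hF : StronglyMeasurable[m] F) (hF₀ : 0 ≤ᵐ[μ] F) (hFC : ∀ᵐ ω ∂μ, ‖F ω‖ ≤ C)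
    (hg : Integrable g μ) (hgM : μ[g | m] ≤ᵐ[μ] fun _ => M) :
    ∫ ω, F ω * g ω ∂μ ≤ M * ∫ ω, F ω ∂μ := by
  have hF_int : Integrable F μ := .of_bound (hF.mono hm).aestronglyMeasurable C hFC
  calc ∫ ω, F ω * g ω ∂μ = ∫ ω, (μ[F * g | m]) ω ∂μ := (integral_condExp hm).symm
    _ = ∫ ω, F ω * (μ[g | m]) ω ∂μ :=
        integral_congr_ae (condExp_stronglyMeasurable_mul_of_bound hm hF hg C hFC)
    _ ≤ ∫ ω, F ω * M ∂μ := by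
        refine integral_mono_ae (integrable_condExp.bdd_mul (hF.mono hm).aestronglyMeasurable hFC)
          (hF_int.mul_const M) ?_
        filter_upwards [hgM, hF₀] with ω hω hFω
        exact mul_le_mul_of_nonneg_left hω hFω
    _ = M * ∫ ω, F ω ∂μ := by rw [integral_mul_const, mul_comm]

theorem integral_prod_le_pow_of_condExp_le [IsProbabilityMeasure μ] {n : ℕ} {f : Fin n → Ω → ℝ}
    {𝓖 : Fin n → MeasurableSpace Ω} {M : ℝ} (h𝓖 : ∀ k, 𝓖 k ≤ m₀)
    (hf : ∀ k, AEStronglyMeasurable (f k) μ) (hf₀ : ∀ k ω, 0 ≤ f k ω) (hf₁ : ∀ k ω, f k ω ≤ 1)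
    (hadapted : ∀ i k, i < k → StronglyMeasurable[𝓖 k] (f i))
    (hcond : ∀ k, μ[f k | 𝓖 k] ≤ᵐ[μ] fun _ => M) (hM : 0 ≤ M) :
    ∫ ω, ∏ k, f k ω ∂μ ≤ M ^ n := by
  induction n with
  | zero => simp
  | succ n ih =>
    set F : Ω → ℝ := fun ω => ∏ i : Fin n, f i.castSucc ω
    have hF_meas : StronglyMeasurable[𝓖 (Fin.last n)] F :=
      Finset.stronglyMeasurable_fun_prod _ fun i _ => hadapted _ _ i.castSucc_lt_last
    have hF₀ : ∀ ω, 0 ≤ F ω := fun ω => Finset.prod_nonneg fun i _ => hf₀ _ ω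
    have hF₁ : ∀ ω, F ω ≤ 1 := fun ω =>
      Finset.prod_le_one (fun i _ => hf₀ _ ω) fun i _ => hf₁ _ ω
    have hFC : ∀ᵐ ω ∂μ, ‖F ω‖ ≤ 1 := .of_forall fun ω => by
      rw [Real.norm_of_nonneg (hF₀ ω)]; exact hF₁ ω
    have hg : Integrable (f (Fin.last n)) μ := .of_bound (hf _) 1 (.of_forall fun ω => by
      rw [Real.norm_of_nonneg (hf₀ _ ω)]; exact hf₁ _ ω)
    have hIH : ∫ ω, F ω ∂μ ≤ M ^ n :=
      ih (fun k => h𝓖 _) (fun k => hf _) (fun k => hf₀ _) (fun k => hf₁ _)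
        (fun i k hik => hadapted _ _ (Fin.castSucc_lt_castSucc_iff.mpr hik)) (fun k => hcond _)
    calc ∫ ω, ∏ k, f k ω ∂μ = ∫ ω, F ω * f (Fin.last n) ω ∂μ := by
          simp only [Fin.prod_univ_castSucc, F]
      _ ≤ M * ∫ ω, F ω ∂μ := integral_mul_le_of_condExp_le (h𝓖 _) hF_meas
          (.of_forall hF₀) hFC hg (hcond _)
      _ ≤ M * M ^ n := mul_le_mul_of_nonneg_left hIH hM
      _ = M ^ (n + 1) := (pow_succ' M n).symm

theorem measurable_comap_subtype_apply {ι β : Type*} [MeasurableSpace β] (X : ι → Ω → β)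
    {p : ι → Prop} {i : ι} (hi : p i) :
    Measurable[MeasurableSpace.comap (fun ω (j : {j // p j}) => X j ω) inferInstance] (X i) :=
  (measurable_pi_apply (⟨i, hi⟩ : {j // p j})).comp
    (comap_measurable fun ω (j : {j // p j}) => X j ω)

end ConditionalLaplaceBound

theorem stmt_5_general {Ω : Type*} [MeasurableSpace Ω] (P : Measure Ω) [IsProbabilityMeasure P]
    (n : ℕ) (ξ : Fin n → Ω → ℝ) (hmeas : ∀ k, Measurable (ξ k))
    (hnonneg : ∀ k ω, 0 ≤ ξ k ω)
    (lam M T : ℝ) (hlam : 0 < lam) (hM0 : 0 < M)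
    (hcond : ∀ k : Fin n,
      P[fun ω => Real.exp (-lam * ξ k ω) |
        MeasurableSpace.comap (fun ω (i : {i : Fin n // i < k}) => ξ i.1 ω) inferInstance]
        ≤ᵐ[P] fun _ => M) :
    P {ω | ∑ k, ξ k ω < T} ≤ ENNReal.ofReal (Real.exp (lam * T) * M ^ n) := by
  set S : Ω → ℝ := fun ω => ∑ k, ξ k ω
  have hexp_sum : ∀ ω, Real.exp (-lam * S ω) = ∏ k, Real.exp (-lam * ξ k ω) := fun ω => by
    simp only [S, Finset.mul_sum, Real.exp_sum]
  have hexp_le_one : ∀ k ω, Real.exp (-lam * ξ k ω) ≤ 1 := fun k ω => by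
    rw [Real.exp_le_one_iff, neg_mul, neg_nonpos]; exact mul_nonneg hlam.le (hnonneg k ω)
  have hlaplace : mgf S P (-lam) ≤ M ^ n := by
    simp only [mgf, hexp_sum]
    refine integral_prod_le_pow_of_condExp_le
      (fun k => (measurable_pi_lambda _ fun i : {i // i < k} => hmeas i.1).comap_le)
      (fun k => ((hmeas k).const_mul _).exp.aestronglyMeasurable)
      (fun k ω => (Real.exp_pos _).le) hexp_le_one
      (fun i k hik =>
        ((measurable_comap_subtype_apply ξ (p := (· < k)) hik).const_mul _).exp.stronglyMeasurable)
      hcond hM0.le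
  have hS_int : Integrable (fun ω => Real.exp (-lam * S ω)) P := by
    have hS_meas : Measurable S := Finset.measurable_sum _ fun k _ => hmeas k
    refine .of_bound (hS_meas.const_mul _).exp.aestronglyMeasurable 1 (.of_forall fun ω => ?_)
    rw [Real.norm_of_nonneg (Real.exp_pos _).le, hexp_sum]
    exact Finset.prod_le_one (fun k _ => (Real.exp_pos _).le) fun k _ => hexp_le_one k ω
  have hchernoff := measure_le_le_exp_mul_mgf T (neg_nonpos.mpr hlam.le) hS_int
  rw [neg_neg] at hchernoff
  calc P {ω | S ω < T} ≤ P {ω | S ω ≤ T} := measure_mono fun ω (hω : S ω < T) => hω.le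
    _ = ENNReal.ofReal (P.real {ω | S ω ≤ T}) := (ofReal_measureReal (measure_ne_top _ _)).symm
    _ ≤ ENNReal.ofReal (Real.exp (lam * T) * M ^ n) := ENNReal.ofReal_le_ofReal <|
        hchernoff.trans (mul_le_mul_of_nonneg_left hlaplace (Real.exp_pos _).le)

/-- If nonnegative random variables `ξ₁,...,ξ_n` satisfy the conditional Laplace bound
`E[exp(-λ ξ_k) | ξ₁,...,ξ_{k-1}] ≤ M` a.s. for every `k`, with `λ > 0`, `M ∈ (0,1)`, then
`P(ξ₁ + ... + ξ_n < T) ≤ exp(λT) Mⁿ` for every `T > 0`. -/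
theorem stmt_5 {Ω : Type*} [MeasurableSpace Ω] (P : Measure Ω) [IsProbabilityMeasure P]
    (n : ℕ) (ξ : Fin n → Ω → ℝ) (hmeas : ∀ k, Measurable (ξ k))
    (hnonneg : ∀ k ω, 0 ≤ ξ k ω)
    (lam M T : ℝ) (hlam : 0 < lam) (hM0 : 0 < M) (hM1 : M < 1) (hT : 0 < T)
    (hcond : ∀ k : Fin n,
      P[fun ω => Real.exp (-lam * ξ k ω) |
        MeasurableSpace.comap (fun ω (i : {i : Fin n // i < k}) => ξ i.1 ω) inferInstance]
        ≤ᵐ[P] fun _ => M) :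
    P {ω | ∑ k, ξ k ω < T} ≤ ENNReal.ofReal (Real.exp (lam * T) * M ^ n) :=
  stmt_5_general P n ξ hmeas hnonneg lam M T hlam hM0 hcond
end

section
/- Let σ₁, σ₂, ... be an increasing sequence of nonnegative random variables with σ₀ = 0, and suppose the increments ξ_k = σ_k - σ_{k-1} are i.i.d. with Laplace transform E[exp(-λξ₁)] ≤ exp(-√(cλ)) for all λ ≥ λ₀, where c, λ₀ > 0. Define N = sup{n : σ_n < T} for T > 0. Then P(N ≥ n) ≤ exp(-c n² / (4T)) whenever n ≥ 2T λ₀^{1/2} c^{-1/2}. -/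
/-!
Chernoff's bound for the lower tail gives, for every `λ ≥ 0`,
`P(σ_n < T) ≤ exp(λT) (E exp(-λξ₁))ⁿ ≤ exp(λT - n√(cλ))` as soon as `λ ≥ λ₀`.
The exponent is minimised at `λ = c n² / (4T²)`, where it equals `-c n² / (4T)`;
the hypothesis on `n` is exactly `λ ≥ λ₀` for this choice.
-/

open MeasureTheory ProbabilityTheory Real Finset

lemma integrable_exp_mul_of_nonpos_of_nonneg {Ω : Type*} [MeasurableSpace Ω] {μ : Measure Ω}
    [IsFiniteMeasure μ] {X : Ω → ℝ} {t : ℝ} (hX : AEMeasurable X μ) (hX₀ : ∀ᵐ ω ∂μ, 0 ≤ X ω)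
    (ht : t ≤ 0) : Integrable (fun ω ↦ exp (t * X ω)) μ := by
  refine .of_mem_Icc 0 1 (measurable_exp.comp_aemeasurable (hX.const_mul t)) ?_
  filter_upwards [hX₀] with ω hω
  exact ⟨(exp_pos _).le, exp_le_one_iff.2 (mul_nonpos_of_nonpos_of_nonneg ht hω)⟩

theorem measure_sum_range_lt_le_exp_mul_mgf_pow {Ω : Type*} [MeasurableSpace Ω]
    {μ : Measure Ω} [IsProbabilityMeasure μ] {ξ : ℕ → Ω → ℝ} (hmeas : ∀ k, Measurable (ξ k))
    (hnonneg : ∀ k ω, 0 ≤ ξ k ω) (hindep : iIndepFun ξ μ)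
    (hident : ∀ k, IdentDistrib (ξ k) (ξ 0) μ μ) {lam : ℝ} (hlam : 0 ≤ lam) (T : ℝ) (n : ℕ) :
    μ {ω | ∑ k ∈ range n, ξ k ω < T} ≤
      ENNReal.ofReal (exp (lam * T) * mgf (ξ 0) μ (-lam) ^ n) := by
  set S := ∑ k ∈ range n, ξ k
  have hS_meas : AEMeasurable S μ := Finset.aemeasurable_sum _ fun k _ ↦ (hmeas k).aemeasurable
  have hS_nonneg : ∀ ω, 0 ≤ S ω := fun ω ↦ by
    simpa only [S, Finset.sum_apply] using Finset.sum_nonneg fun k _ ↦ hnonneg k ω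
  have hmgf : mgf S μ (-lam) = mgf (ξ 0) μ (-lam) ^ n := by
    rw [hindep.mgf_sum hmeas, Finset.prod_eq_pow_card fun k _ ↦
      mgf_congr_of_identDistrib _ _ (hident k) _, card_range]
  have hchernoff := measure_le_le_exp_mul_mgf (μ := μ) T (neg_nonpos.2 hlam)
    (integrable_exp_mul_of_nonpos_of_nonneg hS_meas (ae_of_all _ hS_nonneg) (neg_nonpos.2 hlam))
  rw [neg_neg, hmgf] at hchernoff
  calc μ {ω | ∑ k ∈ range n, ξ k ω < T} ≤ μ {ω | S ω ≤ T} :=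
        measure_mono fun ω hω ↦ by
          simp only [S, Set.mem_ofPred_eq, Finset.sum_apply] at hω ⊢
          exact hω.le
    _ = ENNReal.ofReal (μ.real {ω | S ω ≤ T}) := (ofReal_measureReal (measure_ne_top _ _)).symm
    _ ≤ _ := ENNReal.ofReal_le_ofReal hchernoff

theorem stmt_6_general {Ω : Type*} [MeasurableSpace Ω] (P : Measure Ω) [IsProbabilityMeasure P]
    (ξ : ℕ → Ω → ℝ) (hmeas : ∀ k, Measurable (ξ k)) (hnonneg : ∀ k ω, 0 ≤ ξ k ω)
    (hindep : iIndepFun (m := fun _ => Real.measurableSpace) ξ P)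
    (hident : ∀ k, IdentDistrib (ξ k) (ξ 0) P P)
    (c lam₀ T : ℝ) (hc : 0 < c) (hT : 0 < T)
    (hlap : ∀ lam ≥ lam₀, ∫ ω, Real.exp (-lam * ξ 0 ω) ∂P ≤ Real.exp (-Real.sqrt (c * lam)))
    (n : ℕ) (hn : 2 * T * Real.sqrt lam₀ / Real.sqrt c ≤ n) :
    P {ω | ∑ k ∈ Finset.range n, ξ k ω < T} ≤
      ENNReal.ofReal (Real.exp (-c * n ^ 2 / (4 * T))) := by
  set lam := c * n ^ 2 / (4 * T ^ 2) with hlam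
  have hsqrt_lam : √lam = √c * n / (2 * T) := by
    rw [show lam = (√c * n / (2 * T)) ^ 2 by rw [hlam]; field_simp; rw [sq_sqrt hc.le]; ring]
    exact sqrt_sq (by positivity)
  have hsqrt_c_lam : √(c * lam) = c * n / (2 * T) := by
    rw [sqrt_mul hc.le, hsqrt_lam, ← mul_div_assoc, ← mul_assoc, mul_self_sqrt hc.le]
  have hlam₀_le : lam₀ ≤ lam := by
    rw [← sqrt_le_sqrt_iff (by positivity), hsqrt_lam, le_div_iff₀ (by positivity)]
    rw [div_le_iff₀ (sqrt_pos.2 hc)] at hn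
    linarith
  have hmgf : mgf (ξ 0) P (-lam) ≤ exp (-(c * n / (2 * T))) :=
    hsqrt_c_lam ▸ hlap lam hlam₀_le
  calc P {ω | ∑ k ∈ range n, ξ k ω < T}
      ≤ ENNReal.ofReal (exp (lam * T) * mgf (ξ 0) P (-lam) ^ n) :=
        measure_sum_range_lt_le_exp_mul_mgf_pow hmeas hnonneg hindep hident (by positivity) T n
    _ ≤ ENNReal.ofReal (exp (lam * T) * exp (-(c * n / (2 * T))) ^ n) := by
        gcongr
        exact mgf_nonneg
    _ = ENNReal.ofReal (exp (-c * n ^ 2 / (4 * T))) := by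
        rw [← exp_nat_mul, ← exp_add]
        congr 2
        rw [hlam]
        field_simp
        ring

/-- Let `σ_n = ξ₁ + ... + ξ_n` with `(ξ_k)` i.i.d. nonnegative increments whose Laplace
transform satisfies `E[exp(-λ ξ₁)] ≤ exp(-√(cλ))` for all `λ ≥ λ₀`.  With
`N = sup{n : σ_n < T}`, the event `{N ≥ n}` equals `{σ_n < T}`, and
`P(σ_n < T) ≤ exp(-c n²/(4T))` whenever `n ≥ 2T λ₀^{1/2} c^{-1/2}`. -/
theorem stmt_6 {Ω : Type*} [MeasurableSpace Ω] (P : Measure Ω) [IsProbabilityMeasure P]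
    (ξ : ℕ → Ω → ℝ) (hmeas : ∀ k, Measurable (ξ k)) (hnonneg : ∀ k ω, 0 ≤ ξ k ω)
    (hindep : iIndepFun (m := fun _ => Real.measurableSpace) ξ P)
    (hident : ∀ k, IdentDistrib (ξ k) (ξ 0) P P)
    (c lam₀ T : ℝ) (hc : 0 < c) (hlam₀ : 0 < lam₀) (hT : 0 < T)
    (hlap : ∀ lam ≥ lam₀, ∫ ω, Real.exp (-lam * ξ 0 ω) ∂P ≤ Real.exp (-Real.sqrt (c * lam)))
    (n : ℕ) (hn : 2 * T * Real.sqrt lam₀ / Real.sqrt c ≤ n) :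
    P {ω | ∑ k ∈ Finset.range n, ξ k ω < T} ≤
      ENNReal.ofReal (Real.exp (-c * n ^ 2 / (4 * T))) :=
  stmt_6_general P ξ hmeas hnonneg hindep hident c lam₀ T hc hT hlap n hn
end

section
/- Let ω : {(s,t) : 0 ≤ s ≤ t ≤ T} → [0,∞) be a control (continuous, superadditive, vanishing on the diagonal). Fix a partition 0 = σ₀ < σ₁ < ... < σ_N < σ_{N+1} = T. Then for every partition D = {0 = t₀ < t₁ < ... < t_n = T} with ω(t_i, t_{i+1}) ≤ 1 for all i, one has Σ_{i=0}^{n-1} ω(t_i, t_{i+1}) ≤ N + Σ_{k=0}^{N} ω(σ_k, σ_{k+1}). -/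
/-!
Call an interval `[tᵢ, tᵢ₊₁]` of `D` crossing if some interior point `σₖ` (`1 ≤ k ≤ N`) lies in
its interior. Distinct crossing intervals contain distinct `σₖ`, so there are at most `N` of them,
and each contributes at most `1`. A non-crossing interval lies in one `[σₖ, σₖ₊₁]`, and by
superadditivity the non-crossing intervals inside `[σₖ, σₖ₊₁]` contribute at most `ω(σₖ, σₖ₊₁)`.
-/

open Finset

section Control

variable {α : Type*} [LinearOrder α]

theorem sum_le_of_subintervals {a b : α} {w : α → α → ℝ}
    (hnonneg : ∀ s t, a ≤ s → s ≤ t → t ≤ b → 0 ≤ w s t)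
    (hsuper : ∀ s u t, a ≤ s → s ≤ u → u ≤ t → t ≤ b → w s u + w u t ≤ w s t)
    {n : ℕ} {t : ℕ → α} (ht : MonotoneOn t (Set.Iic n)) {S : Finset ℕ} (hS : S ⊆ range n)
    {s u : α} (has : a ≤ s) (hsu : s ≤ u) (hub : u ≤ b)
    (hmem : ∀ i ∈ S, s ≤ t i ∧ t (i + 1) ≤ u) :
    ∑ i ∈ S, w (t i) (t (i + 1)) ≤ w s u := by
  induction S using Finset.induction_on_max generalizing u with
  | empty => simpa using hnonneg s u has hsu hub
  | insert j S hlt ih =>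
    have hjn : j < n := mem_range.mp (hS (mem_insert_self j S))
    obtain ⟨hsj, hju⟩ := hmem j (mem_insert_self j S)
    have hstep : t j ≤ t (j + 1) := ht (Set.mem_Iic.2 hjn.le) (Set.mem_Iic.2 hjn) j.le_succ
    have hS_le : ∑ i ∈ S, w (t i) (t (i + 1)) ≤ w s (t j) := by
      refine ih ((subset_insert j S).trans hS) hsj (hstep.trans (hju.trans hub)) fun i hi => ?_
      have hin : i < n := mem_range.mp (hS (mem_insert_of_mem hi))
      exact ⟨(hmem i (mem_insert_of_mem hi)).1,
        ht (Set.mem_Iic.2 hin) (Set.mem_Iic.2 hjn.le) (hlt i hi)⟩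
    have h₁ := hsuper s (t j) (t (j + 1)) has hsj hstep (hju.trans hub)
    have h₂ := hsuper s (t (j + 1)) u has (hsj.trans hstep) hju hub
    have h₃ := hnonneg (t (j + 1)) u (has.trans (hsj.trans hstep)) hju hub
    rw [sum_insert fun hj => (hlt j hj).false]
    linarith

theorem card_filter_crossing_le {ι : Type*} {n : ℕ} {t : ℕ → α}
    (ht : MonotoneOn t (Set.Iic n)) (K : Finset ι) (σ : ι → α) :
    #{i ∈ range n | ∃ k ∈ K, t i < σ k ∧ σ k < t (i + 1)} ≤ #K := by
  refine card_le_card_of_forall_subsingleton (fun i k => t i < σ k ∧ σ k < t (i + 1))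
    (fun i hi => by simpa using (mem_filter.mp hi).2) fun k _ i hi j hj => ?_
  obtain ⟨hi_mem, hi_left, hi_right⟩ := hi
  obtain ⟨hj_mem, hj_left, hj_right⟩ := hj
  have hin := mem_range.mp (mem_filter.mp hi_mem).1
  have hjn := mem_range.mp (mem_filter.mp hj_mem).1
  have hsep : ∀ {i j}, i < j → j < n → t (i + 1) ≤ t j := fun hij hjn =>
    ht (Set.mem_Iic.2 (hij.trans hjn)) (Set.mem_Iic.2 hjn.le) hij
  rcases lt_trichotomy i j with hij | rfl | hji
  · exact (lt_irrefl _ (hi_right.trans ((hsep hij hjn).trans_lt hj_left))).elim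
  · rfl
  · exact (lt_irrefl _ (hj_right.trans ((hsep hji hin).trans_lt hi_left))).elim

theorem findGreatest_bracket {σ : ℕ → α} {N : ℕ} {x y : α} (h0 : σ 0 ≤ x)
    (hy : y ≤ σ (N + 1)) (hgap : ¬ ∃ k ∈ Icc 1 N, x < σ k ∧ σ k < y) :
    σ (Nat.findGreatest (σ · ≤ x) N) ≤ x ∧ y ≤ σ (Nat.findGreatest (σ · ≤ x) N + 1) := by
  set k := Nat.findGreatest (σ · ≤ x) N
  refine ⟨Nat.findGreatest_spec (P := (σ · ≤ x)) (Nat.zero_le N) h0, ?_⟩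
  rcases (Nat.findGreatest_le N : k ≤ N).lt_or_eq with hk_lt | hk_eq
  · have hx : x < σ (k + 1) :=
      not_le.mp (Nat.findGreatest_is_greatest (Nat.lt_succ_self k) hk_lt)
    by_contra! hlt
    exact hgap ⟨k + 1, mem_Icc.2 ⟨Nat.le_add_left 1 k, hk_lt⟩, hx, hlt⟩
  · rwa [← hk_eq] at hy

theorem sum_filter_not_crossing_le {a b : α} {w : α → α → ℝ}
    (hnonneg : ∀ s t, a ≤ s → s ≤ t → t ≤ b → 0 ≤ w s t)
    (hsuper : ∀ s u t, a ≤ s → s ≤ u → u ≤ t → t ≤ b → w s u + w u t ≤ w s t)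
    {n N : ℕ} {t σ : ℕ → α} (ht : MonotoneOn t (Set.Iic n)) (hσ : MonotoneOn σ (Set.Iic (N + 1)))
    (ha : a ≤ σ 0) (hb : σ (N + 1) ≤ b) (h0 : σ 0 ≤ t 0) (hn : t n ≤ σ (N + 1)) :
    ∑ i ∈ range n with ¬ ∃ k ∈ (Icc 1 N : Finset ℕ), t i < σ k ∧ σ k < t (i + 1),
        w (t i) (t (i + 1)) ≤ ∑ k ∈ range (N + 1), w (σ k) (σ (k + 1)) := by
  set bracket := fun i => Nat.findGreatest (σ · ≤ t i) N
  have hbracket : ∀ i < n, (¬ ∃ k ∈ Icc 1 N, t i < σ k ∧ σ k < t (i + 1)) →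
      σ (bracket i) ≤ t i ∧ t (i + 1) ≤ σ (bracket i + 1) := fun i hin hgap =>
    findGreatest_bracket
      (h0.trans (ht (Set.mem_Iic.2 (Nat.zero_le n)) (Set.mem_Iic.2 hin.le) (Nat.zero_le i)))
      ((ht (Set.mem_Iic.2 hin) (Set.mem_Iic.2 le_rfl) hin).trans hn) hgap
  rw [← sum_fiberwise_of_maps_to (g := bracket) fun i _ =>
    mem_range.2 (Nat.lt_succ_of_le (Nat.findGreatest_le N))]
  refine sum_le_sum fun k hk => ?_
  have hkN := mem_range.mp hk
  have hσk : σ 0 ≤ σ k := hσ (Set.mem_Iic.2 (Nat.zero_le _)) (Set.mem_Iic.2 hkN.le) (Nat.zero_le k)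
  have hσk1 : σ (k + 1) ≤ σ (N + 1) := hσ (Set.mem_Iic.2 hkN) (Set.mem_Iic.2 le_rfl) hkN
  refine sum_le_of_subintervals hnonneg hsuper ht
    ((filter_subset _ _).trans (filter_subset _ _)) (ha.trans hσk)
    (hσ (Set.mem_Iic.2 hkN.le) (Set.mem_Iic.2 hkN) k.le_succ) (hσk1.trans hb) fun i hi => ?_
  simp only [mem_filter, mem_range] at hi
  obtain ⟨⟨hin, hgap⟩, rfl⟩ := hi
  exact hbracket i hin hgap

theorem stmt_9_general (T : ℝ) (w : ℝ → ℝ → ℝ)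
    (hnonneg : ∀ s t, 0 ≤ s → s ≤ t → t ≤ T → 0 ≤ w s t)
    (hsuper : ∀ s u t, 0 ≤ s → s ≤ u → u ≤ t → t ≤ T → w s u + w u t ≤ w s t)
    (N : ℕ) (σ : ℕ → ℝ) (hσ0 : σ 0 = 0) (hσT : σ (N + 1) = T)
    (hσmono : ∀ i ≤ N, σ i < σ (i + 1))
    (n : ℕ) (t : ℕ → ℝ) (ht0 : t 0 = 0) (htn : t n = T)
    (htmono : ∀ i < n, t i < t (i + 1))
    (hconstr : ∀ i < n, w (t i) (t (i + 1)) ≤ 1) :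
    ∑ i ∈ Finset.range n, w (t i) (t (i + 1)) ≤
      (N : ℝ) + ∑ k ∈ Finset.range (N + 1), w (σ k) (σ (k + 1)) := by
  have ht : MonotoneOn t (Set.Iic n) := (strictMonoOn_Iic_of_lt_succ htmono).monotoneOn
  have hσ : MonotoneOn σ (Set.Iic (N + 1)) :=
    (strictMonoOn_Iic_of_lt_succ fun i hi => hσmono i (Nat.lt_succ_iff.mp hi)).monotoneOn
  rw [← sum_filter_add_sum_filter_not (range n)
    fun i => ∃ k ∈ (Icc 1 N : Finset ℕ), t i < σ k ∧ σ k < t (i + 1)]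
  refine add_le_add ?_ (sum_filter_not_crossing_le hnonneg hsuper ht hσ hσ0.ge hσT.le
    (hσ0.trans ht0.symm).le (htn.trans hσT.symm).le)
  calc _ ≤ #{i ∈ range n | ∃ k ∈ (Icc 1 N : Finset ℕ), t i < σ k ∧ σ k < t (i + 1)} • (1 : ℝ) :=
        sum_le_card_nsmul _ _ _ fun i hi => hconstr i (mem_range.mp (mem_filter.mp hi).1)
    _ ≤ N := by
        simpa using (Nat.cast_le (α := ℝ)).2 (card_filter_crossing_le ht (Icc 1 N) σ)

/-- Let `ω` be a control on `[0,T]` (continuous on the simplex, superadditive, vanishing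
on the diagonal, nonnegative) and `0 = σ₀ < σ₁ < ... < σ_N < σ_{N+1} = T` a fixed
partition.  Then any partition `0 = t₀ < ... < t_n = T` with `ω(t_i,t_{i+1}) ≤ 1`
satisfies `Σ ω(t_i,t_{i+1}) ≤ N + Σ_{k=0}^{N} ω(σ_k, σ_{k+1})`. -/
theorem stmt_9 (T : ℝ) (hT : 0 < T) (w : ℝ → ℝ → ℝ)
    (hcont : ContinuousOn (fun p : ℝ × ℝ => w p.1 p.2)
      {p : ℝ × ℝ | 0 ≤ p.1 ∧ p.1 ≤ p.2 ∧ p.2 ≤ T})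
    (hnonneg : ∀ s t, 0 ≤ s → s ≤ t → t ≤ T → 0 ≤ w s t)
    (hdiag : ∀ s, 0 ≤ s → s ≤ T → w s s = 0)
    (hsuper : ∀ s u t, 0 ≤ s → s ≤ u → u ≤ t → t ≤ T → w s u + w u t ≤ w s t)
    (N : ℕ) (σ : ℕ → ℝ) (hσ0 : σ 0 = 0) (hσT : σ (N + 1) = T)
    (hσmono : ∀ i ≤ N, σ i < σ (i + 1))
    (n : ℕ) (t : ℕ → ℝ) (ht0 : t 0 = 0) (htn : t n = T)
    (htmono : ∀ i < n, t i < t (i + 1))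
    (hconstr : ∀ i < n, w (t i) (t (i + 1)) ≤ 1) :
    ∑ i ∈ Finset.range n, w (t i) (t (i + 1)) ≤
      (N : ℝ) + ∑ k ∈ Finset.range (N + 1), w (σ k) (σ (k + 1)) :=
  stmt_9_general T w hnonneg hsuper N σ hσ0 hσT hσmono n t ht0 htn htmono hconstr
end Control
end

section
/- Let ω be a control on [0,T] and define M(ω) = sup { Σ_i ω(t_i, t_{i+1}) : partitions (t_i) of [0,T] with ω(t_i, t_{i+1}) ≤ 1 for all i }. If 0 = σ₀ < ... < σ_N < σ_{N+1} = T is any partition, then M(ω) ≤ N + Σ_{k=0}^{N} ω(σ_k, σ_{k+1}). -/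
lemma key_superadd_sum (T : ℝ) (w : ℝ → ℝ → ℝ)
    (hnonneg : ∀ s t, 0 ≤ s → s ≤ t → t ≤ T → 0 ≤ w s t)
    (hsuper : ∀ s u t, 0 ≤ s → s ≤ u → u ≤ t → t ≤ T → w s u + w u t ≤ w s t)
    (t : ℕ → ℝ) :
    ∀ (I : Finset ℕ) (a b : ℝ), 0 ≤ a → a ≤ b → b ≤ T →
    (∀ i ∈ I, a ≤ t i ∧ t i ≤ t (i + 1) ∧ t (i + 1) ≤ b) →
    (∀ i ∈ I, ∀ j ∈ I, i < j → t (i + 1) ≤ t j) →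
    ∑ i ∈ I, w (t i) (t (i + 1)) ≤ w a b := by
  intro I
  induction I using Finset.strongInduction with
  | _ I ih =>
    intro a b ha hab hbT hI hord
    rcases I.eq_empty_or_nonempty with rfl | hne
    · simpa using hnonneg a b ha hab hbT
    · set M := I.max' hne with hM
      have hMI : M ∈ I := I.max'_mem hne
      obtain ⟨haM, hMM, hMb⟩ := hI M hMI
      have htM0 : 0 ≤ t M := le_trans ha haM
      have htMT : t M ≤ T := le_trans (le_trans hMM hMb) hbT
      have htM1T : t (M + 1) ≤ T := le_trans hMb hbT
      have hsub : I.erase M ⊂ I := Finset.erase_ssubset hMI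
      have h1 : ∑ i ∈ I.erase M, w (t i) (t (i + 1)) ≤ w a (t M) := by
        apply ih _ hsub a (t M) ha haM htMT
        · intro i hi
          have hiI := Finset.mem_of_mem_erase hi
          have hiM : i < M := lt_of_le_of_ne (I.le_max' i hiI) (Finset.ne_of_mem_erase hi)
          exact ⟨(hI i hiI).1, (hI i hiI).2.1, hord i hiI M hMI hiM⟩
        · intro i hi j hj hij
          exact hord i (Finset.mem_of_mem_erase hi) j (Finset.mem_of_mem_erase hj) hij
      have h2 : ∑ i ∈ I, w (t i) (t (i + 1))
          = ∑ i ∈ I.erase M, w (t i) (t (i + 1)) + w (t M) (t (M + 1)) :=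
        (Finset.sum_erase_add I _ hMI).symm
      rw [h2]
      calc ∑ i ∈ I.erase M, w (t i) (t (i + 1)) + w (t M) (t (M + 1))
          ≤ w a (t M) + w (t M) (t (M + 1)) := by gcongr
        _ ≤ w a (t (M + 1)) := hsuper a (t M) (t (M + 1)) ha haM hMM htM1T
        _ ≤ w a (t (M + 1)) + w (t (M + 1)) b :=
            le_add_of_nonneg_right (hnonneg _ _ (le_trans htM0 hMM) hMb hbT)
        _ ≤ w a b := hsuper a (t (M + 1)) b ha (le_trans haM hMM) hMb hbT


/-- The accumulated local variation of a control `w` on `[0,T]`: the supremum of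
`Σ w(t_i, t_{i+1})` over partitions of `[0,T]` whose consecutive `w`-increments are at
most `1`. -/
noncomputable def accLocVar (T : ℝ) (w : ℝ → ℝ → ℝ) : ℝ :=
  sSup {S : ℝ | ∃ (n : ℕ) (t : ℕ → ℝ), t 0 = 0 ∧ t n = T ∧
    (∀ i < n, t i < t (i + 1)) ∧ (∀ i < n, w (t i) (t (i + 1)) ≤ 1) ∧
    S = ∑ i ∈ Finset.range n, w (t i) (t (i + 1))}

/-- For a control `w` on `[0,T]` and any partition `0 = σ₀ < ... < σ_N < σ_{N+1} = T`,
the accumulated local variation satisfies `M(w) ≤ N + Σ_{k=0}^{N} w(σ_k,σ_{k+1})`. -/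
theorem stmt_10 (T : ℝ) (hT : 0 < T) (w : ℝ → ℝ → ℝ)
    (hcont : ContinuousOn (fun p : ℝ × ℝ => w p.1 p.2)
      {p : ℝ × ℝ | 0 ≤ p.1 ∧ p.1 ≤ p.2 ∧ p.2 ≤ T})
    (hnonneg : ∀ s t, 0 ≤ s → s ≤ t → t ≤ T → 0 ≤ w s t)
    (hdiag : ∀ s, 0 ≤ s → s ≤ T → w s s = 0)
    (hsuper : ∀ s u t, 0 ≤ s → s ≤ u → u ≤ t → t ≤ T → w s u + w u t ≤ w s t)
    (N : ℕ) (σ : ℕ → ℝ) (hσ0 : σ 0 = 0) (hσT : σ (N + 1) = T)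
    (hσmono : ∀ i ≤ N, σ i < σ (i + 1)) :
    accLocVar T w ≤ (N : ℝ) + ∑ k ∈ Finset.range (N + 1), w (σ k) (σ (k + 1)) := by
  classical
  -- basic monotonicity facts for σ
  have σmono : ∀ j, j ≤ N + 1 → ∀ i, i ≤ j → σ i ≤ σ j := by
    intro j hj
    induction j with
    | zero => intro i hi; interval_cases i; exact le_refl _
    | succ j ihj =>
      intro i hi
      rcases Nat.lt_or_ge i (j + 1) with h | h
      · exact le_trans (ihj (by omega) i (by omega)) (le_of_lt (hσmono j (by omega)))
      · have : i = j + 1 := by omega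
        subst this; exact le_refl _
  have σ0 : ∀ k, k ≤ N + 1 → 0 ≤ σ k := by
    intro k hk; rw [← hσ0]; exact σmono k hk 0 (Nat.zero_le _)
  have σT : ∀ k, k ≤ N + 1 → σ k ≤ T := by
    intro k hk; rw [← hσT]; exact σmono (N + 1) (le_refl _) k hk
  have hRHSnn : 0 ≤ (N : ℝ) + ∑ k ∈ Finset.range (N + 1), w (σ k) (σ (k + 1)) := by
    apply add_nonneg (Nat.cast_nonneg N)
    apply Finset.sum_nonneg
    intro k hk
    have hkN : k ≤ N := by simpa [Nat.lt_succ_iff] using hk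
    exact hnonneg _ _ (σ0 k (by omega)) (le_of_lt (hσmono k hkN)) (σT (k + 1) (by omega))
  apply Real.sSup_le _ hRHSnn
  rintro S ⟨n, t, ht0, htn, htmono, htle, rfl⟩
  -- monotonicity facts for t
  have tmono : ∀ j, j ≤ n → ∀ i, i ≤ j → t i ≤ t j := by
    intro j hj
    induction j with
    | zero => intro i hi; interval_cases i; exact le_refl _
    | succ j ihj =>
      intro i hi
      rcases Nat.lt_or_ge i (j + 1) with h | h
      · exact le_trans (ihj (by omega) i (by omega)) (le_of_lt (htmono j (by omega)))
      · have : i = j + 1 := by omega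
        subst this; exact le_refl _
  have t0 : ∀ i, i ≤ n → 0 ≤ t i := by
    intro i hi; rw [← ht0]; exact tmono i hi 0 (Nat.zero_le _)
  have tT : ∀ i, i ≤ n → t i ≤ T := by
    intro i hi; rw [← htn]; exact tmono n (le_refl _) i hi
  -- the set of indices whose interval contains an interior σ-point
  set P : ℕ → Prop := fun i => ∃ k, 1 ≤ k ∧ k ≤ N ∧ t i < σ k ∧ σ k < t (i + 1) with hP
  set A : Finset ℕ := (Finset.range n).filter P with hA
  set B : Finset ℕ := (Finset.range n).filter (fun i => ¬ P i) with hB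
  have hsplit : ∑ i ∈ Finset.range n, w (t i) (t (i + 1))
      = ∑ i ∈ A, w (t i) (t (i + 1)) + ∑ i ∈ B, w (t i) (t (i + 1)) :=
    (Finset.sum_filter_add_sum_filter_not _ _ _).symm
  -- bound the A part by N
  have hAcard : A.card ≤ N := by
    have : ∀ i ∈ A, (if h : P i then Classical.choose h else 0) ∈ Finset.Icc 1 N := by
      intro i hi
      have hPi : P i := (Finset.mem_filter.mp hi).2
      rw [dif_pos hPi]
      obtain ⟨h1, h2, _, _⟩ := Classical.choose_spec hPi
      exact Finset.mem_Icc.mpr ⟨h1, h2⟩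
    have hinj : Set.InjOn (fun i => if h : P i then Classical.choose h else 0) A := by
      intro i hi j hj hij
      by_contra hne
      have hPi : P i := (Finset.mem_filter.mp hi).2
      have hPj : P j := (Finset.mem_filter.mp hj).2
      have hin : i < n := Finset.mem_range.mp (Finset.mem_filter.mp hi).1
      have hjn : j < n := Finset.mem_range.mp (Finset.mem_filter.mp hj).1
      simp only [dif_pos hPi, dif_pos hPj] at hij
      obtain ⟨_, _, hi1, hi2⟩ := Classical.choose_spec hPi
      obtain ⟨_, _, hj1, hj2⟩ := Classical.choose_spec hPj
      rw [hij] at hi1 hi2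
      rcases Nat.lt_or_ge i j with h | h
      · have := tmono j (by omega) (i + 1) (by omega)
        linarith
      · have hji : j < i := by omega
        have := tmono i (by omega) (j + 1) (by omega)
        linarith
    calc A.card ≤ (Finset.Icc 1 N).card := Finset.card_le_card_of_injOn _ this hinj
      _ = N := by simp
  have hApart : ∑ i ∈ A, w (t i) (t (i + 1)) ≤ (N : ℝ) := by
    calc ∑ i ∈ A, w (t i) (t (i + 1)) ≤ ∑ i ∈ A, (1 : ℝ) := by
          apply Finset.sum_le_sum
          intro i hi
          exact htle i (Finset.mem_range.mp (Finset.mem_filter.mp hi).1)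
      _ = (A.card : ℝ) := by simp
      _ ≤ (N : ℝ) := by exact_mod_cast hAcard
  -- the fiber map for B
  set κ : ℕ → ℕ := fun i => Nat.findGreatest (fun k => σ k ≤ t i) N with hκ
  have hκle : ∀ i, κ i ≤ N := fun i => Nat.findGreatest_le N
  have hκspec : ∀ i, i < n → σ (κ i) ≤ t i := by
    intro i hi
    have h0 : σ 0 ≤ t i := by rw [hσ0]; exact t0 i (by omega)
    exact Nat.findGreatest_spec (P := fun k => σ k ≤ t i) (Nat.zero_le N) h0
  have hκup : ∀ i ∈ B, t (i + 1) ≤ σ (κ i + 1) := by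
    intro i hi
    have hin : i < n := Finset.mem_range.mp (Finset.mem_filter.mp hi).1
    have hnP : ¬ P i := (Finset.mem_filter.mp hi).2
    rcases Nat.lt_or_ge (κ i) N with h | h
    · by_contra hc
      push_neg at hc
      have hgt : t i < σ (κ i + 1) := by
        have := Nat.findGreatest_is_greatest (Nat.lt_succ_self (κ i)) (by omega :
          κ i + 1 ≤ N)
        simpa [hκ] using lt_of_not_ge this
      exact hnP ⟨κ i + 1, by omega, by omega, hgt, hc⟩
    · have hκN : κ i = N := le_antisymm (hκle i) h
      rw [hκN, hσT, ← htn]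
      exact tmono n (le_refl _) (i + 1) (by omega)
  have hκmaps : ∀ i ∈ B, κ i ∈ Finset.range (N + 1) := by
    intro i _; exact Finset.mem_range.mpr (by have := hκle i; omega)
  have hBpart : ∑ i ∈ B, w (t i) (t (i + 1))
      ≤ ∑ k ∈ Finset.range (N + 1), w (σ k) (σ (k + 1)) := by
    rw [← Finset.sum_fiberwise_of_maps_to hκmaps]
    apply Finset.sum_le_sum
    intro k hk
    have hkN : k ≤ N := by simpa [Nat.lt_succ_iff] using hk
    apply key_superadd_sum T w hnonneg hsuper t _ (σ k) (σ (k + 1))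
      (σ0 k (by omega)) (le_of_lt (hσmono k hkN)) (σT (k + 1) (by omega))
    · intro i hi
      have hiB : i ∈ B := (Finset.mem_filter.mp hi).1
      have hκi : κ i = k := (Finset.mem_filter.mp hi).2
      have hin : i < n := Finset.mem_range.mp (Finset.mem_filter.mp hiB).1
      refine ⟨?_, le_of_lt (htmono i hin), ?_⟩
      · rw [← hκi]; exact hκspec i hin
      · rw [← hκi]; exact hκup i hiB
    · intro i hi j hj hij
      have hin : i < n := Finset.mem_range.mp (Finset.mem_filter.mp
        ((Finset.mem_filter.mp hi).1)).1
      have hjn : j < n := Finset.mem_range.mp (Finset.mem_filter.mp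
        ((Finset.mem_filter.mp hj).1)).1
      exact tmono j (by omega) (i + 1) (by omega)
  rw [hsplit]
  exact add_le_add hApart hBpart
end

section
/- Let x : [0,T] → E be a continuous path into a metric space of finite p-variation for some p ≥ 1, and let ω_x(s,t) = ‖x‖_{p-var;[s,t]}^p be its control. Fix r > 0 and let (σ_n) be the greedy partition at scale r with N = N₀^r(x,[0,T]) finite. Then M(x,[0,T]) ≤ N + Σ_{j=1}^{N} ω_x(σ_{j-1}, σ_j) + ω_x(σ_N, T), where M(x,[0,T]) = sup over partitions D with ω_x(t_i,t_{i+1}) ≤ 1 of Σ ω_x(t_i,t_{i+1}). -/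
/-- The set of partition sums defining the `p`-variation of `x` over `[s,t]`. -/
def pVarSet {E : Type*} [PseudoMetricSpace E] (x : ℝ → E) (p s t : ℝ) : Set ℝ :=
  {S : ℝ | ∃ (n : ℕ) (u : ℕ → ℝ), u 0 = s ∧ u n = t ∧ (∀ i < n, u i ≤ u (i + 1)) ∧
    S = ∑ i ∈ Finset.range n, dist (x (u i)) (x (u (i + 1))) ^ p}

/-- `ω_x(s,t) = ‖x‖_{p-var;[s,t]}^p`, the control induced by `x`. -/
noncomputable def pVarControl {E : Type*} [PseudoMetricSpace E] (x : ℝ → E) (p s t : ℝ) : ℝ :=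
  sSup (pVarSet x p s t)

/-- The accumulated local `p`-variation `M(x,[0,T])`. -/
noncomputable def accLocPVar {E : Type*} [PseudoMetricSpace E] (x : ℝ → E) (p T : ℝ) : ℝ :=
  sSup {S : ℝ | ∃ (n : ℕ) (t : ℕ → ℝ), t 0 = 0 ∧ t n = T ∧
    (∀ i < n, t i < t (i + 1)) ∧ (∀ i < n, pVarControl x p (t i) (t (i + 1)) ≤ 1) ∧
    S = ∑ i ∈ Finset.range n, pVarControl x p (t i) (t (i + 1))}

/-!
Append `T` to `σ 0 ≤ ⋯ ≤ σ N` to get a partition `τ` of `[0, T]` into `N + 1` blocks. Each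
interval `[t i, t (i + 1)]` of a partition with `ω ≤ 1` on its pieces either lies inside one
block `[τ j, τ (j + 1)]` or strictly straddles some `τ j` with `1 ≤ j ≤ N`. By superadditivity
of `ω` (partitions concatenate), the intervals inside block `j` contribute at most
`ω(τ j, τ (j + 1))` in total. Distinct straddling intervals straddle distinct points `τ j`, so
there are at most `N` of them, each contributing at most `1`.
-/

open Finset

section PVariation

variable {E : Type*} [PseudoMetricSpace E] {x : ℝ → E} {p a a' b b' c S S' : ℝ}

theorem zero_mem_pVarSet : (0 : ℝ) ∈ pVarSet x p a a :=
  ⟨0, fun _ => a, rfl, rfl, by simp, by simp⟩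

theorem add_dist_rpow_mem_pVarSet (hS : S ∈ pVarSet x p a b) (hbc : b ≤ c) :
    S + dist (x b) (x c) ^ p ∈ pVarSet x p a c := by
  obtain ⟨n, u, hu0, hun, hu, rfl⟩ := hS
  refine ⟨n + 1, fun i => if i ≤ n then u i else c, by simp [hu0], by simp, ?_, ?_⟩
  · intro i hi
    rcases Nat.lt_succ_iff_lt_or_eq.mp hi with hi | rfl
    · simpa [hi.le, Nat.succ_le_of_lt hi] using hu i hi
    · simpa [hun] using hbc
  · rw [sum_range_succ]
    congr 1
    · refine sum_congr rfl fun i hi => ?_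
      have hi : i < n := mem_range.mp hi
      simp [hi.le, Nat.succ_le_of_lt hi]
    · simp [hun]

theorem add_mem_pVarSet (hS : S ∈ pVarSet x p a b) (hS' : S' ∈ pVarSet x p b c) :
    S + S' ∈ pVarSet x p a c := by
  obtain ⟨k, v, hv0, hvk, hv, rfl⟩ := hS'
  have key : ∀ m ≤ k,
      S + ∑ i ∈ range m, dist (x (v i)) (x (v (i + 1))) ^ p ∈ pVarSet x p a (v m) := by
    intro m hm
    induction m with
    | zero => simpa [hv0] using hS
    | succ m ih =>
      rw [sum_range_succ, ← add_assoc]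
      exact add_dist_rpow_mem_pVarSet (ih (by omega)) (hv m (by omega))
  simpa [hvk] using key k le_rfl

theorem nonneg_of_mem_pVarSet (hS : S ∈ pVarSet x p a b) : 0 ≤ S := by
  obtain ⟨n, u, -, -, -, rfl⟩ := hS
  exact sum_nonneg fun _ _ => Real.rpow_nonneg dist_nonneg p

variable (x p a b) in
theorem pVarControl_nonneg : 0 ≤ pVarControl x p a b :=
  Real.sSup_nonneg fun _ => nonneg_of_mem_pVarSet

theorem dist_rpow_mem_pVarSet (hab : a ≤ b) : dist (x a) (x b) ^ p ∈ pVarSet x p a b := by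
  simpa using add_dist_rpow_mem_pVarSet (zero_mem_pVarSet (x := x) (p := p) (a := a)) hab

theorem exists_le_mem_pVarSet (ha : a ≤ a') (hb : b' ≤ b) (hS : S ∈ pVarSet x p a' b') :
    ∃ T ∈ pVarSet x p a b, S ≤ T :=
  ⟨_, add_dist_rpow_mem_pVarSet (add_mem_pVarSet (dist_rpow_mem_pVarSet ha) hS) hb, by
    have := Real.rpow_nonneg (dist_nonneg (x := x a) (y := x a')) p
    have := Real.rpow_nonneg (dist_nonneg (x := x b') (y := x b)) p
    linarith⟩

theorem BddAbove.pVarSet_of_le (h : BddAbove (pVarSet x p a b)) (ha : a ≤ a') (hb : b' ≤ b) :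
    BddAbove (pVarSet x p a' b') := by
  obtain ⟨M, hM⟩ := h
  refine ⟨M, fun S hS => ?_⟩
  obtain ⟨T, hT, hST⟩ := exists_le_mem_pVarSet ha hb hS
  exact hST.trans (hM hT)

theorem pVarControl_le_of_le (h : BddAbove (pVarSet x p a b)) (ha : a ≤ a') (hb : b' ≤ b) :
    pVarControl x p a' b' ≤ pVarControl x p a b :=
  Real.sSup_le (fun S hS => by
    obtain ⟨T, hT, hST⟩ := exists_le_mem_pVarSet ha hb hS
    exact hST.trans (le_csSup h hT)) (pVarControl_nonneg x p a b)

theorem pVarControl_add_le (h : BddAbove (pVarSet x p a c)) (hab : a ≤ b) (hbc : b ≤ c) :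
    pVarControl x p a b + pVarControl x p b c ≤ pVarControl x p a c := by
  rw [pVarControl, pVarControl, ← csSup_add ⟨_, dist_rpow_mem_pVarSet hab⟩
    (h.pVarSet_of_le le_rfl hbc) ⟨_, dist_rpow_mem_pVarSet hbc⟩ (h.pVarSet_of_le hab le_rfl)]
  exact csSup_le_csSup h
    (Set.add_nonempty.mpr ⟨⟨_, dist_rpow_mem_pVarSet hab⟩, ⟨_, dist_rpow_mem_pVarSet hbc⟩⟩)
    (Set.add_subset_iff.mpr fun _ hS _ hS' => add_mem_pVarSet hS hS')

theorem sum_pVarControl_le {t : ℕ → ℝ} (ht : Monotone t) (h : BddAbove (pVarSet x p a b))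
    {I : Finset ℕ} (hI : ∀ i ∈ I, a ≤ t i ∧ t (i + 1) ≤ b) :
    ∑ i ∈ I, pVarControl x p (t i) (t (i + 1)) ≤ pVarControl x p a b := by
  induction I using Finset.induction_on_max generalizing b with
  | empty => simpa using pVarControl_nonneg x p a b
  | insert m I hlt ih =>
    obtain ⟨ham, hmb⟩ := hI m (mem_insert_self m I)
    have hstep : t m ≤ t (m + 1) := ht m.le_succ
    have hI' : ∑ i ∈ I, pVarControl x p (t i) (t (i + 1)) ≤ pVarControl x p a (t m) :=
      ih (h.pVarSet_of_le le_rfl (hstep.trans hmb)) fun i hi =>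
        ⟨(hI i (mem_insert_of_mem hi)).1, ht (hlt i hi)⟩
    rw [sum_insert fun hm => (hlt m hm).false]
    calc pVarControl x p (t m) (t (m + 1)) + ∑ i ∈ I, pVarControl x p (t i) (t (i + 1))
        ≤ pVarControl x p a (t m) + pVarControl x p (t m) (t (m + 1)) := by linarith
      _ ≤ pVarControl x p a (t (m + 1)) :=
        pVarControl_add_le (h.pVarSet_of_le le_rfl hmb) ham hstep
      _ ≤ pVarControl x p a b := pVarControl_le_of_le h le_rfl hmb

end PVariation

theorem monotone_comp_min_of_le_succ {α : Type*} [Preorder α] {t : ℕ → α} {n : ℕ}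
    (h : ∀ i < n, t i ≤ t (i + 1)) : Monotone fun i => t (min i n) :=
  monotone_nat_of_le_succ fun i => by
    rcases lt_or_ge i n with hi | hi
    · simpa [hi.le, Nat.succ_le_of_lt hi] using h i hi
    · simp [hi, hi.trans i.le_succ]

section Partition

variable {E : Type*} [PseudoMetricSpace E] {x : ℝ → E} {p : ℝ} {τ t : ℕ → ℝ} {K n : ℕ}

/-- For `τ 0 ≤ s < τ (K + 1)` and `τ` monotone, the index `j` of the block `[τ j, τ (j + 1))`
containing `s`. -/
noncomputable def blockIndex (τ : ℕ → ℝ) (K : ℕ) (s : ℝ) : ℕ :=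
  Nat.findGreatest (fun j => τ j ≤ s) K

theorem blockIndex_le (s : ℝ) : blockIndex τ K s ≤ K := Nat.findGreatest_le K

theorem apply_blockIndex_le {s : ℝ} (h : τ 0 ≤ s) : τ (blockIndex τ K s) ≤ s :=
  Nat.findGreatest_spec (P := fun j => τ j ≤ s) (Nat.zero_le K) h

theorem le_blockIndex {j : ℕ} {s : ℝ} (hj : j ≤ K) (h : τ j ≤ s) : j ≤ blockIndex τ K s :=
  Nat.le_findGreatest hj h

theorem card_crossing_le (ht : Monotone t) (htτ : t n ≤ τ (K + 1)) :
    #{i ∈ range n | τ (blockIndex τ K (t i) + 1) < t (i + 1)} ≤ K := by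
  set B := {i ∈ range n | τ (blockIndex τ K (t i) + 1) < t (i + 1)}
  have hlt : ∀ i ∈ B, blockIndex τ K (t i) < K := by
    intro i hi
    obtain ⟨hin, hcross⟩ := mem_filter.mp hi
    refine (blockIndex_le _).lt_of_ne fun hK => ?_
    rw [hK] at hcross
    exact ((hcross.trans_le (ht (mem_range.mp hin))).trans_le htτ).false
  have hmono : StrictMonoOn (fun i => blockIndex τ K (t i)) B := fun i hi i' _ hii' =>
    Nat.lt_of_succ_le (le_blockIndex (hlt i hi) ((mem_filter.mp hi).2.le.trans (ht hii')))
  calc #B ≤ #(range K) :=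
        card_le_card_of_injOn _ (fun i hi => mem_range.mpr (hlt i hi)) hmono.injOn
    _ = K := card_range K

theorem sum_filter_pVarControl_le (ht : Monotone t) (hτt : τ 0 ≤ t 0)
    (hbdd : ∀ j ≤ K, BddAbove (pVarSet x p (τ j) (τ (j + 1)))) :
    ∑ i ∈ range n with t (i + 1) ≤ τ (blockIndex τ K (t i) + 1),
        pVarControl x p (t i) (t (i + 1)) ≤
      ∑ j ∈ range (K + 1), pVarControl x p (τ j) (τ (j + 1)) := by
  rw [← sum_fiberwise_of_maps_to (g := fun i => blockIndex τ K (t i)) (t := range (K + 1))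
    fun i _ => mem_range.mpr (Nat.lt_succ_of_le (blockIndex_le _))]
  refine sum_le_sum fun j hj => sum_pVarControl_le ht
    (hbdd j (Nat.lt_succ_iff.mp (mem_range.mp hj))) fun i hi => ?_
  obtain ⟨⟨-, hinside⟩, rfl⟩ := by simpa only [mem_filter] using hi
  exact ⟨apply_blockIndex_le (hτt.trans (ht (Nat.zero_le i))), hinside⟩

theorem sum_pVarControl_le_add_sum {a b : ℝ} (hbdd : BddAbove (pVarSet x p a b))
    (hτ : Monotone τ) (hτ0 : τ 0 = a) (hτK : τ (K + 1) = b)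
    (ht : Monotone t) (ht0 : t 0 = a) (htn : t n = b)
    (hle : ∀ i < n, pVarControl x p (t i) (t (i + 1)) ≤ 1) :
    ∑ i ∈ range n, pVarControl x p (t i) (t (i + 1)) ≤
      K + ∑ j ∈ range (K + 1), pVarControl x p (τ j) (τ (j + 1)) := by
  rw [← sum_filter_add_sum_filter_not (range n) fun i => t (i + 1) ≤ τ (blockIndex τ K (t i) + 1)]
  have hinside := sum_filter_pVarControl_le (K := K) (n := n) ht
    (hτ0.trans ht0.symm).le
    fun j hj => hbdd.pVarSet_of_le (hτ0 ▸ hτ (Nat.zero_le j)) (hτK ▸ hτ (by omega))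
  have hcrossing : ∑ i ∈ range n with ¬t (i + 1) ≤ τ (blockIndex τ K (t i) + 1),
      pVarControl x p (t i) (t (i + 1)) ≤ K := by
    simp_rw [not_le]
    calc _ ≤ ∑ i ∈ range n with τ (blockIndex τ K (t i) + 1) < t (i + 1), (1 : ℝ) :=
          sum_le_sum fun i hi => hle i (mem_range.mp (mem_filter.mp hi).1)
      _ ≤ K := by
        rw [sum_const, nsmul_one]
        exact_mod_cast card_crossing_le ht (htn.trans hτK.symm).le
  linarith

theorem accLocPVar_le {T : ℝ} (hbdd : BddAbove (pVarSet x p 0 T)) (hτ : Monotone τ)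
    (hτ0 : τ 0 = 0) (hτK : τ (K + 1) = T) :
    accLocPVar x p T ≤ K + ∑ j ∈ range (K + 1), pVarControl x p (τ j) (τ (j + 1)) := by
  refine Real.sSup_le ?_
    (add_nonneg K.cast_nonneg (sum_nonneg fun j _ => pVarControl_nonneg x p _ _))
  rintro _ ⟨n, t, ht0, htn, hlt, hle, rfl⟩
  have hclamp : ∀ i < n, min i n = i ∧ min (i + 1) n = i + 1 := fun i hi =>
    ⟨min_eq_left hi.le, min_eq_left (Nat.succ_le_of_lt hi)⟩
  calc ∑ i ∈ range n, pVarControl x p (t i) (t (i + 1))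
      = ∑ i ∈ range n, pVarControl x p (t (min i n)) (t (min (i + 1) n)) :=
        sum_congr rfl fun i hi => by
          obtain ⟨h₁, h₂⟩ := hclamp i (mem_range.mp hi)
          rw [h₁, h₂]
    _ ≤ _ := sum_pVarControl_le_add_sum hbdd hτ hτ0 hτK
        (monotone_comp_min_of_le_succ fun i hi => (hlt i hi).le) (by simpa using ht0)
        (by simpa using htn) fun i hi => by simpa only [hclamp i hi] using hle i hi

end Partition

theorem stmt_12_general {E : Type*} [PseudoMetricSpace E] (T : ℝ)
    (x : ℝ → E) (p : ℝ)
    (hfin : ∀ s t : ℝ, 0 ≤ s → s ≤ t → t ≤ T → BddAbove (pVarSet x p s t))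
    (N : ℕ) (σ : ℕ → ℝ) (hσ0 : σ 0 = 0)
    (hσmono : ∀ n < N, σ n ≤ σ (n + 1))
    (hσlt : ∀ n ≤ N, σ n < T) :
    accLocPVar x p T ≤ (N : ℝ) +
      (∑ j ∈ Finset.range N, pVarControl x p (σ j) (σ (j + 1))) +
      pVarControl x p (σ N) T := by
  set τ : ℕ → ℝ := fun j => if j ≤ N then σ j else T
  have hτ : Monotone τ := monotone_nat_of_le_succ fun j => by
    rcases lt_trichotomy j N with hj | rfl | hj
    · simpa [τ, hj.le, Nat.succ_le_of_lt hj] using hσmono j hj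
    · simpa [τ] using (hσlt j le_rfl).le
    · simp [τ, hj.not_ge, (hj.trans j.lt_succ_self).not_ge]
  have hsum : ∑ j ∈ range (N + 1), pVarControl x p (τ j) (τ (j + 1)) =
      ∑ j ∈ range N, pVarControl x p (σ j) (σ (j + 1)) + pVarControl x p (σ N) T := by
    rw [sum_range_succ]
    congr 1
    · exact sum_congr rfl fun j hj => by
        simp [τ, (mem_range.mp hj).le, Nat.succ_le_of_lt (mem_range.mp hj)]
    · simp [τ]
  have hT : 0 ≤ T := (hσ0 ▸ hσlt 0 (Nat.zero_le N)).le
  calc accLocPVar x p T ≤ N + ∑ j ∈ range (N + 1), pVarControl x p (τ j) (τ (j + 1)) :=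
        accLocPVar_le (hfin 0 T le_rfl hT le_rfl) hτ (by simp [τ, hσ0]) (by simp [τ])
    _ = _ := by rw [hsum, add_assoc]

/-- Key estimate: with `(σ_n)` the greedy partition of `[0,T]` at scale `r` and
`N = N₀^r(x,[0,T])`, the accumulated local `p`-variation satisfies
`M(x,[0,T]) ≤ N + Σ_{j=1}^{N} ω_x(σ_{j-1},σ_j) + ω_x(σ_N, T)`. -/
theorem stmt_12 {E : Type*} [PseudoMetricSpace E] (T : ℝ) (hT : 0 < T)
    (x : ℝ → E) (hcont : Continuous x) (p : ℝ) (hp : 1 ≤ p)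
    (hfin : ∀ s t : ℝ, 0 ≤ s → s ≤ t → t ≤ T → BddAbove (pVarSet x p s t))
    (r : ℝ) (hr : 0 < r) (N : ℕ) (σ : ℕ → ℝ) (hσ0 : σ 0 = 0)
    (hσmono : ∀ n < N, σ n ≤ σ (n + 1))
    (hgreedy : ∀ n < N, σ (n + 1) = sInf {t : ℝ | σ n ≤ t ∧ r ≤ dist (x (σ n)) (x t)})
    (hσlt : ∀ n ≤ N, σ n < T) :
    accLocPVar x p T ≤ (N : ℝ) +
      (∑ j ∈ Finset.range N, pVarControl x p (σ j) (σ (j + 1))) +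
      pVarControl x p (σ N) T :=
  stmt_12_general T x p hfin N σ hσ0 hσmono hσlt
end
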